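/- arXiv:math/0404029 — 2 statements merged into one kernel-verified Lean document; each statement's English description precedes it below -/
import Mathlib

section
/- Let B be a G-cograded Hopf algebra with left integral φ (a linear functional with (ι ⊗ φ)Δ(b) = φ(b)·1), and π an admissible action. Then φ is also left invariant for the deformed comultiplication Δ̃: (ι ⊗ φ)Δ̃(b) = φ(b)·1 for all b ∈ B. -/
/-!
Write `1 = ∑ u_q` with `u_q ∈ B_q`; by orthogonality `u_q` is a unit of `B_q`, and by the
cograding the finitely many `q` with `B_q ≠ 0` form a subgroup. For `b ∈ B_p` the slices
`(ι ⊗ φ)(Δ(b)(1 ⊗ u_q))` lie in the distinct components `B_{pq⁻¹}` and add up to `φ(b)·1`, so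
they equal `φ(b) u_{pq⁻¹}`. Hence `(ι ⊗ φ)Δ̃(b) = φ(b) ∑_q π_{q⁻¹}(u_{pq⁻¹})`. Each
`π_{q⁻¹}(u_{pq⁻¹})` is the unit of the component `ρ(q⁻¹, pq⁻¹)`, and since `π` of that index is
`π(q⁻¹p)` these components are pairwise distinct, so they exhaust the support and the sum is `1`.
-/

open TensorProduct DirectSum

/-- The subspace of `B ⊗ B` spanned by tensors `x ⊗ y` with `x ∈ P`, `y ∈ Q`. -/
noncomputable def tensorSub {B : Type*} [Ring B] [Algebra ℂ B]
    (P Q : Submodule ℂ B) : Submodule ℂ (B ⊗[ℂ] B) :=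
  Submodule.span ℂ {z | ∃ x ∈ P, ∃ y ∈ Q, z = x ⊗ₜ[ℂ] y}

theorem Finset.inv_mem_of_mul_mem {G : Type*} [Group G] {S : Finset G}
    (hmul : ∀ a ∈ S, ∀ b ∈ S, a * b ∈ S) {a : G} (ha : a ∈ S) : a⁻¹ ∈ S := by
  have hpow : ∀ n : ℕ, a ^ (n + 1) ∈ S := fun n => by
    induction n with
    | zero => simpa using ha
    | succ n ih => rw [pow_succ]; exact hmul _ ih _ ha
  have hfin : IsOfFinOrder a := finite_powers.mp <| (S.finite_toSet.insert 1).subset <| by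
    rintro _ ⟨n, rfl⟩
    cases n with
    | zero => simp
    | succ n => exact Or.inr (hpow n)
  obtain ⟨n, hn⟩ : ∃ n, orderOf a = n + 1 := Nat.exists_eq_add_one.mpr hfin.orderOf_pos
  -- `a⁻¹ = a ^ (2 * orderOf a - 1)`, an exponent that is never `0`
  have hinv : a ^ (2 * n + 1) = a⁻¹ := by
    rw [eq_inv_iff_mul_eq_one, ← pow_succ, show 2 * n + 1 + 1 = orderOf a * 2 by omega,
      pow_mul, pow_orderOf_eq_one, one_pow]
  exact hinv ▸ hpow (2 * n)

section Slice

variable {R M M' N : Type*} [CommSemiring R] [AddCommMonoid M] [Module R M]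
  [AddCommMonoid M'] [Module R M'] [AddCommMonoid N] [Module R N]

/-- The slice map `ι ⊗ φ : M ⊗ N → M ⊗ R ≅ M`. -/
noncomputable def slice (φ : N →ₗ[R] R) : M ⊗[R] N →ₗ[R] M :=
  (TensorProduct.rid R M).toLinearMap ∘ₗ TensorProduct.map LinearMap.id φ

@[simp]
theorem slice_tmul (φ : N →ₗ[R] R) (x : M) (y : N) : slice φ (x ⊗ₜ[R] y) = φ y • x := by
  simp [slice]

theorem slice_map_id (φ : N →ₗ[R] R) (f : M →ₗ[R] M') (z : M ⊗[R] N) :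
    slice φ (TensorProduct.map f LinearMap.id z) = f (slice φ z) := by
  induction z using TensorProduct.induction_on with
  | zero => simp
  | tmul x y => simp
  | add z w hz hw => simp only [map_add, hz, hw]

end Slice

theorem TensorProduct.tmul_ne_zero {K V W : Type*} [Field K] [AddCommGroup V] [Module K V]
    [AddCommGroup W] [Module K W] {x : V} {y : W} (hx : x ≠ 0) (hy : y ≠ 0) :
    x ⊗ₜ[K] y ≠ 0 := by
  obtain ⟨f, hf⟩ : ∃ f : Module.Dual K W, f y ≠ 0 := by
    by_contra! h
    exact hy ((Module.forall_dual_apply_eq_zero_iff K y).mp h)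
  intro h
  have := congrArg (slice f) h
  rw [slice_tmul, map_zero] at this
  exact smul_ne_zero hf hx this

section TensorSub

variable {B : Type*} [Ring B] [Algebra ℂ B] {P Q : Submodule ℂ B}

theorem tensorSub_ne_bot (hP : P ≠ ⊥) (hQ : Q ≠ ⊥) : tensorSub P Q ≠ ⊥ := by
  obtain ⟨x, hx, hx0⟩ := P.ne_bot_iff.mp hP
  obtain ⟨y, hy, hy0⟩ := Q.ne_bot_iff.mp hQ
  exact (Submodule.ne_bot_iff _).mpr
    ⟨x ⊗ₜ y, Submodule.subset_span ⟨x, hx, y, hy, rfl⟩, TensorProduct.tmul_ne_zero hx0 hy0⟩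

theorem slice_mem_of_mem_tensorSub (φ : B →ₗ[ℂ] ℂ) {z : B ⊗[ℂ] B} (hz : z ∈ tensorSub P Q) :
    slice φ z ∈ P := by
  induction hz using Submodule.span_induction with
  | mem z hz =>
    obtain ⟨x, hx, y, hy, rfl⟩ := hz
    simpa using P.smul_mem _ hx
  | zero => simp
  | add _ _ _ _ h₁ h₂ => simpa using P.add_mem h₁ h₂
  | smul c _ _ h => simpa using P.smul_mem c h

end TensorSub

def IsMulOrthogonal {ι R A : Type*} [Semiring R] [Mul A] [AddCommMonoid A] [Module R A]
    (ℬ : ι → Submodule R A) : Prop :=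
  ∀ i j, i ≠ j → ∀ a ∈ ℬ i, ∀ b ∈ ℬ j, a * b = 0

section GradedUnit

variable {ι R A : Type*} [DecidableEq ι] [CommSemiring R] [Semiring A] [Algebra R A]
  (ℬ : ι → Submodule R A) [Decomposition ℬ]

noncomputable def gradedUnit (i : ι) : A := decompose ℬ (1 : A) i

noncomputable def gradedSupport : Finset ι := by
  classical exact (decompose ℬ (1 : A)).support

variable {ℬ}

theorem gradedUnit_mem (i : ι) : gradedUnit ℬ i ∈ ℬ i := (decompose ℬ (1 : A) i).2

theorem sum_gradedUnit : ∑ i ∈ gradedSupport ℬ, gradedUnit ℬ i = 1 := by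
  classical exact sum_support_decompose ℬ (1 : A)

theorem gradedUnit_eq_zero {i : ι} (hi : i ∉ gradedSupport ℬ) : gradedUnit ℬ i = 0 := by
  classical
  unfold gradedSupport at hi
  simp [gradedUnit, DFinsupp.notMem_support_iff.mp hi]

theorem gradedUnit_mul_of_mem (horth : IsMulOrthogonal ℬ) {i : ι} {x : A} (hx : x ∈ ℬ i) :
    gradedUnit ℬ i * x = x := by
  calc gradedUnit ℬ i * x = ∑ j ∈ gradedSupport ℬ, gradedUnit ℬ j * x :=
        (Finset.sum_eq_single i (fun j _ hj => horth j i hj _ (gradedUnit_mem j) x hx)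
          (fun hi => by rw [gradedUnit_eq_zero hi, zero_mul])).symm
    _ = x := by rw [← Finset.sum_mul, sum_gradedUnit, one_mul]

theorem mul_gradedUnit_of_mem (horth : IsMulOrthogonal ℬ) {i : ι} {x : A} (hx : x ∈ ℬ i) :
    x * gradedUnit ℬ i = x := by
  calc x * gradedUnit ℬ i = ∑ j ∈ gradedSupport ℬ, x * gradedUnit ℬ j :=
        (Finset.sum_eq_single i (fun j _ hj => horth i j hj.symm x hx _ (gradedUnit_mem j))
          (fun hi => by rw [gradedUnit_eq_zero hi, mul_zero])).symm
    _ = x := by rw [← Finset.mul_sum, sum_gradedUnit, mul_one]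

theorem mem_gradedSupport_iff (horth : IsMulOrthogonal ℬ) {i : ι} :
    i ∈ gradedSupport ℬ ↔ ℬ i ≠ ⊥ := by
  refine ⟨fun hi hbot => ?_, fun hne => ?_⟩
  · classical
    unfold gradedSupport at hi
    refine DFinsupp.mem_support_iff.mp hi (Subtype.ext ?_)
    exact (Submodule.mem_bot R).mp (hbot ▸ gradedUnit_mem i)
  · obtain ⟨x, hx, hx0⟩ := (Submodule.ne_bot_iff _).mp hne
    by_contra hi
    rw [← gradedUnit_mul_of_mem horth hx, gradedUnit_eq_zero hi, zero_mul] at hx0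
    exact hx0 rfl

theorem gradedUnit_mul_sum (horth : IsMulOrthogonal ℬ) {κ : Type*} {s : Finset κ} {σ : κ → ι}
    (hσ : Set.InjOn σ s) {x : κ → A} (hx : ∀ k, x k ∈ ℬ (σ k)) {k : κ} (hk : k ∈ s) :
    gradedUnit ℬ (σ k) * ∑ l ∈ s, x l = x k := by
  rw [Finset.mul_sum, Finset.sum_eq_single_of_mem k hk fun l hl hlk =>
    horth _ _ (fun h => hlk (hσ hl hk h.symm)) _ (gradedUnit_mem _) _ (hx l)]
  exact gradedUnit_mul_of_mem horth (hx k)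

theorem map_gradedUnit (horth : IsMulOrthogonal ℬ) (f : A →ₐ[R] A) {i j : ι}
    (h : (ℬ i).map f.toLinearMap = ℬ j) :
    f (gradedUnit ℬ i) = gradedUnit ℬ j := by
  have hmem : f (gradedUnit ℬ i) ∈ ℬ j := h ▸ Submodule.mem_map_of_mem (gradedUnit_mem i)
  obtain ⟨x, hx, hfx⟩ := Submodule.mem_map.mp (h.symm ▸ gradedUnit_mem (ℬ := ℬ) j)
  calc f (gradedUnit ℬ i) = gradedUnit ℬ j * f (gradedUnit ℬ i) :=
        (gradedUnit_mul_of_mem horth hmem).symm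
    _ = gradedUnit ℬ j := by
        rw [← hfx, AlgHom.toLinearMap_apply, ← map_mul, mul_gradedUnit_of_mem horth hx]

theorem sum_gradedUnit_comp {τ : ι → ι} (hτ : ∀ i ∈ gradedSupport ℬ, τ i ∈ gradedSupport ℬ)
    (hinj : Set.InjOn τ (gradedSupport ℬ)) :
    ∑ i ∈ gradedSupport ℬ, gradedUnit ℬ (τ i) = 1 :=
  (Finset.sum_nbij τ hτ hinj (Finset.surjOn_of_injOn_of_card_le τ hτ hinj le_rfl)
    fun _ _ => rfl).trans sum_gradedUnit

end GradedUnit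

/-- One half of the paper's `G`-cograding: `Δ(B_{pq})(1 ⊗ B_q) = B_p ⊗ B_q`. -/
def IsCograded {G B : Type*} [Mul G] [Ring B] [Algebra ℂ B] (Δ : B →ₗ[ℂ] B ⊗[ℂ] B)
    (ℬ : G → Submodule ℂ B) : Prop :=
  ∀ p q : G, Submodule.span ℂ {z | ∃ a ∈ ℬ (p * q), ∃ b ∈ ℬ q, z = Δ a * (1 ⊗ₜ[ℂ] b)} =
    tensorSub (ℬ p) (ℬ q)

section Cograded

variable {G B : Type*} [DecidableEq G] [Ring B] [Algebra ℂ B]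
  {ℬ : G → Submodule ℂ B} [Decomposition ℬ] {Δ : B →ₗ[ℂ] B ⊗[ℂ] B}

theorem mul_mem_gradedSupport [Mul G]
    (horth : IsMulOrthogonal ℬ) (hcograded : IsCograded Δ ℬ) {p q : G}
    (hp : p ∈ gradedSupport ℬ) (hq : q ∈ gradedSupport ℬ) : p * q ∈ gradedSupport ℬ := by
  rw [mem_gradedSupport_iff horth] at hp hq ⊢
  intro hpq
  refine tensorSub_ne_bot hp hq (hcograded p q ▸ (Submodule.span_eq_bot.mpr ?_))
  rintro _ ⟨a, ha, b, -, rfl⟩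
  rw [hpq, Submodule.mem_bot] at ha
  rw [ha, map_zero, zero_mul]

theorem sum_mul_one_tmul_gradedUnit (z : B ⊗[ℂ] B) :
    ∑ q ∈ gradedSupport ℬ, z * (1 ⊗ₜ[ℂ] gradedUnit ℬ q) = z := by
  rw [← Finset.mul_sum, ← TensorProduct.tmul_sum, sum_gradedUnit,
    ← Algebra.TensorProduct.one_def, mul_one]

variable [Group G]

theorem mul_inv_mem_gradedSupport (horth : IsMulOrthogonal ℬ) (hcograded : IsCograded Δ ℬ)
    {p q : G} (hp : p ∈ gradedSupport ℬ) (hq : q ∈ gradedSupport ℬ) :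
    p * q⁻¹ ∈ gradedSupport ℬ :=
  have hmul : ∀ a ∈ gradedSupport ℬ, ∀ b ∈ gradedSupport ℬ, a * b ∈ gradedSupport ℬ :=
    fun _ ha _ hb => mul_mem_gradedSupport horth hcograded ha hb
  hmul p hp q⁻¹ (Finset.inv_mem_of_mul_mem hmul hq)

theorem slice_mul_one_tmul_gradedUnit
    (horth : IsMulOrthogonal ℬ) (hcograded : IsCograded Δ ℬ)
    {φ : B →ₗ[ℂ] ℂ} (hφ : ∀ b, slice φ (Δ b) = φ b • (1 : B))
    {p q : G} {b : B} (hb : b ∈ ℬ p) (hq : q ∈ gradedSupport ℬ) :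
    slice φ (Δ b * (1 ⊗ₜ[ℂ] gradedUnit ℬ q)) = φ b • gradedUnit ℬ (p * q⁻¹) := by
  have hmem : ∀ r, slice φ (Δ b * (1 ⊗ₜ[ℂ] gradedUnit ℬ r)) ∈ ℬ (p * r⁻¹) := fun r => by
    refine slice_mem_of_mem_tensorSub φ (Q := ℬ r) ?_
    rw [← hcograded (p * r⁻¹) r]
    exact Submodule.subset_span ⟨b, by rwa [inv_mul_cancel_right], _, gradedUnit_mem r, rfl⟩
  have hsum : ∑ r ∈ gradedSupport ℬ, slice φ (Δ b * (1 ⊗ₜ[ℂ] gradedUnit ℬ r)) = φ b • 1 := by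
    rw [← map_sum, sum_mul_one_tmul_gradedUnit, hφ]
  have hinj : Set.InjOn (fun r => p * r⁻¹) (gradedSupport ℬ) :=
    ((mul_right_injective p).comp inv_injective).injOn
  rw [← gradedUnit_mul_sum horth hinj hmem hq, hsum, mul_smul_comm, mul_one]

theorem slice_eq_smul_sum_of_mem
    (horth : IsMulOrthogonal ℬ) (hcograded : IsCograded Δ ℬ)
    {φ : B →ₗ[ℂ] ℂ} (hφ : ∀ b, slice φ (Δ b) = φ b • (1 : B))
    (T : G → B →ₗ[ℂ] B) {Δt : B →ₗ[ℂ] B ⊗[ℂ] B}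
    (hΔt : ∀ (b : B) (q : G), ∀ b' ∈ ℬ q,
      Δt b * (1 ⊗ₜ[ℂ] b') = TensorProduct.map (T q⁻¹) LinearMap.id (Δ b * (1 ⊗ₜ[ℂ] b')))
    {p : G} {b : B} (hb : b ∈ ℬ p) :
    slice φ (Δt b) = φ b • ∑ q ∈ gradedSupport ℬ, T q⁻¹ (gradedUnit ℬ (p * q⁻¹)) := by
  calc slice φ (Δt b)
      = ∑ q ∈ gradedSupport ℬ, slice φ (Δt b * (1 ⊗ₜ[ℂ] gradedUnit ℬ q)) := by
        rw [← map_sum, sum_mul_one_tmul_gradedUnit]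
    _ = ∑ q ∈ gradedSupport ℬ, φ b • T q⁻¹ (gradedUnit ℬ (p * q⁻¹)) :=
        Finset.sum_congr rfl fun q hq => by
          rw [hΔt b q _ (gradedUnit_mem q), slice_map_id,
            slice_mul_one_tmul_gradedUnit horth hcograded hφ hb hq, map_smul]
    _ = _ := Finset.smul_sum.symm

theorem sum_map_gradedUnit_mul_inv_eq_one
    (horth : IsMulOrthogonal ℬ) (hcograded : IsCograded Δ ℬ)
    (π : G →* (B ≃ₐ[ℂ] B)) (ρ : G → G → G)
    (hπℬ : ∀ p q : G, (ℬ q).map (π p).toLinearMap = ℬ (ρ p q))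
    (hπρ : ∀ p q : G, π (ρ p q) = π (p * q * p⁻¹))
    {p : G} (hp : p ∈ gradedSupport ℬ) :
    ∑ q ∈ gradedSupport ℬ, π q⁻¹ (gradedUnit ℬ (p * q⁻¹)) = 1 := by
  set τ : G → G := fun q => ρ q⁻¹ (p * q⁻¹)
  have hunit (q : G) : π q⁻¹ (gradedUnit ℬ (p * q⁻¹)) = gradedUnit ℬ (τ q) :=
    map_gradedUnit horth (π q⁻¹ : B →ₐ[ℂ] B) (by rw [AlgEquiv.toAlgHom_toLinearMap, hπℬ])
  have hne (q : G) (hq : q ∈ gradedSupport ℬ) : ℬ (p * q⁻¹) ≠ ⊥ :=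
    (mem_gradedSupport_iff horth).mp (mul_inv_mem_gradedSupport horth hcograded hp hq)
  have hmaps (q : G) (hq : q ∈ gradedSupport ℬ) : τ q ∈ gradedSupport ℬ := by
    rw [mem_gradedSupport_iff horth, ← hπℬ]
    exact fun h => hne q hq <| Submodule.map_injective_of_injective (π q⁻¹).injective <|
      h.trans (Submodule.map_bot _).symm
  have hinj : Set.InjOn τ (gradedSupport ℬ) := by
    intro q hq q' _ h
    have hτ (r : G) : π (τ r) = π (r⁻¹ * p) := by rw [hπρ]; congr 1; group
    have hπ : π q⁻¹ = π q'⁻¹ := by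
      rw [← mul_inv_cancel_right q⁻¹ p, ← mul_inv_cancel_right q'⁻¹ p,
        map_mul π (q⁻¹ * p), map_mul π (q'⁻¹ * p), ← hτ, ← hτ, h]
    have hℬ : ℬ (p * q⁻¹) = ℬ (p * q'⁻¹) :=
      Submodule.map_injective_of_injective (π q⁻¹).injective <| by
        rw [hπℬ, hπ, hπℬ]
        exact congrArg ℬ h
    obtain ⟨x, hx, hx0⟩ := (Submodule.ne_bot_iff _).mp (hne q hq)
    exact inv_injective (mul_left_cancel (degree_eq_of_mem_mem ℬ hx (hℬ ▸ hx) hx0))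
  rw [Finset.sum_congr rfl fun q _ => hunit q]
  exact sum_gradedUnit_comp hmaps hinj

end Cograded

theorem deformed_comultiplication_left_integral_general
    {G : Type*} [Group G] [DecidableEq G] {B : Type*} [Ring B] [HopfAlgebra ℂ B]
    (ℬ : G → Submodule ℂ B)
    (hdec : DirectSum.IsInternal ℬ)
    (horth : ∀ p q : G, p ≠ q → ∀ a ∈ ℬ p, ∀ b ∈ ℬ q, a * b = 0)
    (hcograded₁ : ∀ p q : G,
      Submodule.span ℂ {z | ∃ a ∈ ℬ (p * q), ∃ b ∈ ℬ q,
        z = (Coalgebra.comul (R := ℂ) a) * (1 ⊗ₜ[ℂ] b)} = tensorSub (ℬ p) (ℬ q))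
    -- the admissible action
    (π : G →* (B ≃ₐ[ℂ] B)) (ρ : G → G → G)
    (hπℬ : ∀ p q : G, (ℬ q).map (π p).toLinearMap = ℬ (ρ p q))
    (hπρ : ∀ p q : G, π (ρ p q) = π (p * q * p⁻¹))
    -- the deformed comultiplication
    (Δt : B →ₗ[ℂ] B ⊗[ℂ] B)
    (hΔt : ∀ (b : B) (q : G), ∀ b' ∈ ℬ q,
      Δt b * (1 ⊗ₜ[ℂ] b') = (TensorProduct.map (π q⁻¹).toLinearMap LinearMap.id)
        (Coalgebra.comul (R := ℂ) b * (1 ⊗ₜ[ℂ] b')))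
    (φ : B →ₗ[ℂ] ℂ)
    (hφ : ∀ b : B, (TensorProduct.rid ℂ B) ((TensorProduct.map LinearMap.id φ)
      (Coalgebra.comul (R := ℂ) b)) = φ b • (1 : B)) :
    ∀ b : B, (TensorProduct.rid ℂ B) ((TensorProduct.map LinearMap.id φ) (Δt b))
      = φ b • (1 : B) := by
  let := hdec.chooseDecomposition
  show ∀ b, slice φ (Δt b) = φ b • 1
  intro b
  induction b using Decomposition.inductionOn ℬ with
  | zero => simp
  | add x y hx hy => rw [map_add, map_add, hx, hy, map_add, add_smul]
  | @homogeneous p b =>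
    by_cases hp : p ∈ gradedSupport ℬ
    · rw [slice_eq_smul_sum_of_mem horth hcograded₁ hφ (fun g => (π g).toLinearMap) hΔt b.2]
      simp only [AlgEquiv.toLinearMap_apply]
      rw [sum_map_gradedUnit_mul_inv_eq_one horth hcograded₁ π ρ hπℬ hπρ hp]
    · rw [mem_gradedSupport_iff horth, not_not] at hp
      obtain rfl : b = 0 := Subtype.ext ((Submodule.mem_bot ℂ).mp (hp ▸ b.2))
      simp

/-- a left integral `φ` on `B` (i.e. `(ι ⊗ φ)Δ(b) = φ(b)·1`)
remains left invariant for the deformed comultiplication `Δ̃`: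
`(ι ⊗ φ)Δ̃(b) = φ(b)·1` for all `b ∈ B`. -/
theorem deformed_comultiplication_left_integral
    {G : Type*} [Group G] [DecidableEq G] {B : Type*} [Ring B] [HopfAlgebra ℂ B]
    (ℬ : G → Submodule ℂ B)
    (hdec : DirectSum.IsInternal ℬ)
    (horth : ∀ p q : G, p ≠ q → ∀ a ∈ ℬ p, ∀ b ∈ ℬ q, a * b = 0)
    (hcograded₁ : ∀ p q : G,
      Submodule.span ℂ {z | ∃ a ∈ ℬ (p * q), ∃ b ∈ ℬ q,
        z = (Coalgebra.comul (R := ℂ) a) * (1 ⊗ₜ[ℂ] b)} = tensorSub (ℬ p) (ℬ q))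
    (hcograded₂ : ∀ p q : G,
      Submodule.span ℂ {z | ∃ a ∈ ℬ (p * q), ∃ b ∈ ℬ p,
        z = (b ⊗ₜ[ℂ] 1) * (Coalgebra.comul (R := ℂ) a)} = tensorSub (ℬ p) (ℬ q))
    -- the admissible action
    (π : G →* (B ≃ₐ[ℂ] B)) (ρ : G → G → G)
    (hπΔ : ∀ (p : G) (b : B), Coalgebra.comul (R := ℂ) (π p b) =
      (TensorProduct.map (π p).toLinearMap (π p).toLinearMap) (Coalgebra.comul (R := ℂ) b))
    (hπℬ : ∀ p q : G, (ℬ q).map (π p).toLinearMap = ℬ (ρ p q))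
    (hπρ : ∀ p q : G, π (ρ p q) = π (p * q * p⁻¹))
    -- the deformed comultiplication
    (Δt : B →ₗ[ℂ] B ⊗[ℂ] B)
    (hΔt : ∀ (b : B) (q : G), ∀ b' ∈ ℬ q,
      Δt b * (1 ⊗ₜ[ℂ] b') = (TensorProduct.map (π q⁻¹).toLinearMap LinearMap.id)
        (Coalgebra.comul (R := ℂ) b * (1 ⊗ₜ[ℂ] b')))
    (φ : B →ₗ[ℂ] ℂ)
    (hφ : ∀ b : B, (TensorProduct.rid ℂ B) ((TensorProduct.map LinearMap.id φ)
      (Coalgebra.comul (R := ℂ) b)) = φ b • (1 : B)) :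
    ∀ b : B, (TensorProduct.rid ℂ B) ((TensorProduct.map LinearMap.id φ) (Δt b))
      = φ b • (1 : B) :=
  deformed_comultiplication_left_integral_general ℬ hdec horth hcograded₁ π ρ hπℬ hπρ Δt hΔt φ hφ
end

section
/- Suppose the admissible action π of G on the G-cograded Hopf algebra B is a crossing, i.e., π_p(B_q) = B_{pqp⁻¹} for all p, q. Then the deformed coalgebra B̃ = (B, Δ̃) is again G-cograded with components B̃_p = B_{p⁻¹}: namely Δ̃(B̃_p)(1 ⊗ B̃_q) = B̃_{pq⁻¹} ⊗ B̃_q and (B̃_q ⊗ 1)Δ̃(B̃_p) = B̃_q ⊗ B̃_{q⁻¹p} for all p, q ∈ G. -/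
/-!
Right multiplication by `1 ⊗ y` only twists the first leg of `Δ̃ x` by `π`, so the first identity
is the image of the cograding of `Δ` under `π ⊗ ι`, and the crossing property moves the component
`B_{p⁻¹q}` to `B_{qp⁻¹}`. For the second, test `(y ⊗ 1) Δ̃ x` against `1 ⊗ b` with `b ∈ B_s`: by
the orthogonality of the components only `s = p⁻¹q` contributes, which gives
`(y ⊗ 1) Δ̃ x = (π_{q⁻¹p} ⊗ ι)((π_{p⁻¹q} y ⊗ 1) Δ x)`; since the homogeneous `b` span `B`
and `1 ⊗ 1 = 1`, this identity holds, and the cograding of `Δ` is again transported by `π`.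
-/

open TensorProduct

lemma setOf_exists_mem_eq_image2 {α β γ S T : Type*} [SetLike S α] [SetLike T β]
    (f : α → β → γ) (s : S) (t : T) :
    {z | ∃ x ∈ s, ∃ y ∈ t, z = f x y} = Set.image2 f s t := by
  ext z
  simp only [Set.mem_ofPred_eq, Set.mem_image2, SetLike.mem_coe, eq_comm]

section

variable {B : Type*} [Ring B] [Algebra ℂ B]

lemma tensorSub_eq_span_image2 (P Q : Submodule ℂ B) :
    tensorSub P Q = Submodule.span ℂ (Set.image2 (· ⊗ₜ[ℂ] ·) P Q) := by
  rw [tensorSub, setOf_exists_mem_eq_image2]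

lemma tensorSub_map_map (f g : B →ₗ[ℂ] B) (P Q : Submodule ℂ B) :
    (tensorSub P Q).map (TensorProduct.map f g) = tensorSub (P.map f) (Q.map g) := by
  simp only [tensorSub_eq_span_image2, Submodule.map_span, Set.image_image2, map_tmul,
    Submodule.map_coe, Set.image2_image_left, Set.image2_image_right]

lemma map_id_mul (f : B ≃ₐ[ℂ] B) (u v : B ⊗[ℂ] B) :
    map f.toLinearMap LinearMap.id (u * v) =
      map f.toLinearMap LinearMap.id u * map f.toLinearMap LinearMap.id v :=
  map_mul (Algebra.TensorProduct.map f.toAlgHom (AlgHom.id ℂ B)) u v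

lemma tmul_one_mul_map_id (f : B ≃ₐ[ℂ] B) (y : B) (w : B ⊗[ℂ] B) :
    (y ⊗ₜ[ℂ] (1 : B)) * map f.toLinearMap LinearMap.id w =
      map f.toLinearMap LinearMap.id ((f.symm y ⊗ₜ[ℂ] (1 : B)) * w) := by
  rw [map_id_mul, map_tmul]
  simp

lemma map_id_mul_one_tmul (f : B ≃ₐ[ℂ] B) (Z : B ⊗[ℂ] B) (b : B) :
    map f.toLinearMap LinearMap.id Z * (1 ⊗ₜ[ℂ] b) =
      map f.toLinearMap LinearMap.id (Z * (1 ⊗ₜ[ℂ] b)) := by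
  rw [map_id_mul, map_tmul]
  simp

lemma tmul_one_mul_eq_zero_of_mem_tensorSub {P Q : Submodule ℂ B} {u : B}
    (hu : ∀ x ∈ P, u * x = 0) {t : B ⊗[ℂ] B} (ht : t ∈ tensorSub P Q) :
    (u ⊗ₜ[ℂ] (1 : B)) * t = 0 := by
  induction ht using Submodule.span_induction with
  | mem z hz =>
    obtain ⟨x, hx, y, hy, rfl⟩ := hz
    rw [Algebra.TensorProduct.tmul_mul_tmul, hu x hx, zero_tmul]
  | zero => rw [mul_zero]
  | add a b _ _ ha hb => rw [mul_add, ha, hb, add_zero]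
  | smul c a _ ha => rw [mul_smul_comm, ha, smul_zero]

lemma eq_of_forall_mul_one_tmul_eq {ι : Type*} {ℬ : ι → Submodule ℂ B}
    (hsup : ⨆ s, ℬ s = ⊤) {X Y : B ⊗[ℂ] B}
    (h : ∀ s, ∀ b ∈ ℬ s, X * (1 ⊗ₜ[ℂ] b) = Y * (1 ⊗ₜ[ℂ] b)) : X = Y := by
  let mulOneTmul : (B ⊗[ℂ] B) → B →ₗ[ℂ] B ⊗[ℂ] B :=
    fun Z => LinearMap.mulLeft ℂ Z ∘ₗ TensorProduct.mk ℂ B B 1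
  have hle : ⊤ ≤ LinearMap.eqLocus (mulOneTmul X) (mulOneTmul Y) :=
    hsup ▸ iSup_le fun s b hb => h s b hb
  simpa [mulOneTmul, ← Algebra.TensorProduct.one_def] using hle (Submodule.mem_top (x := 1))

end

section

variable {G : Type*} [Group G] {B : Type*} [Ring B] [Algebra ℂ B]

def IsLeftCograding (ℬ : G → Submodule ℂ B) (Δ : B →ₗ[ℂ] B ⊗[ℂ] B) : Prop :=
  ∀ p q : G, Submodule.span ℂ {z | ∃ a ∈ ℬ (p * q), ∃ b ∈ ℬ q, z = Δ a * (1 ⊗ₜ[ℂ] b)} =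
    tensorSub (ℬ p) (ℬ q)

def IsRightCograding (ℬ : G → Submodule ℂ B) (Δ : B →ₗ[ℂ] B ⊗[ℂ] B) : Prop :=
  ∀ p q : G, Submodule.span ℂ {z | ∃ a ∈ ℬ (p * q), ∃ b ∈ ℬ p, z = (b ⊗ₜ[ℂ] 1) * Δ a} =
    tensorSub (ℬ p) (ℬ q)

def IsCrossing (ℬ : G → Submodule ℂ B) (π : G →* (B ≃ₐ[ℂ] B)) : Prop :=
  ∀ p q : G, (ℬ q).map (π p).toLinearMap = ℬ (p * q * p⁻¹)

def IsDeformedComul (ℬ : G → Submodule ℂ B) (π : G →* (B ≃ₐ[ℂ] B))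
    (Δ Δt : B →ₗ[ℂ] B ⊗[ℂ] B) : Prop :=
  ∀ (b : B) (q : G), ∀ b' ∈ ℬ q,
    Δt b * (1 ⊗ₜ[ℂ] b') = map (π q⁻¹).toLinearMap LinearMap.id (Δ b * (1 ⊗ₜ[ℂ] b'))

variable {ℬ : G → Submodule ℂ B} {π : G →* (B ≃ₐ[ℂ] B)} {Δ Δt : B →ₗ[ℂ] B ⊗[ℂ] B}

lemma IsCrossing.apply_mem (hcross : IsCrossing ℬ π) (g : G) {s : G} {y : B} (hy : y ∈ ℬ s) :
    π g y ∈ ℬ (g * s * g⁻¹) :=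
  hcross g s ▸ ⟨y, hy, rfl⟩

lemma IsLeftCograding.mul_one_tmul_mem (hcog : IsLeftCograding ℬ Δ) {r s : G} {a b : B}
    (ha : a ∈ ℬ r) (hb : b ∈ ℬ s) : Δ a * (1 ⊗ₜ[ℂ] b) ∈ tensorSub (ℬ (r * s⁻¹)) (ℬ s) :=
  hcog (r * s⁻¹) s ▸ Submodule.subset_span ⟨a, by rwa [inv_mul_cancel_right], b, hb, rfl⟩

theorem IsDeformedComul.tmul_one_mul (hΔt : IsDeformedComul ℬ π Δ Δt)
    (hsup : ⨆ s, ℬ s = ⊤) (horth : ∀ p q : G, p ≠ q → ∀ a ∈ ℬ p, ∀ b ∈ ℬ q, a * b = 0)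
    (hcog : IsLeftCograding ℬ Δ) (hcross : IsCrossing ℬ π) {r t : G} {x y : B}
    (hx : x ∈ ℬ r) (hy : y ∈ ℬ t) :
    (y ⊗ₜ[ℂ] (1 : B)) * Δt x = map (π (t * r⁻¹)).toLinearMap LinearMap.id
      ((π (t * r⁻¹)⁻¹ y ⊗ₜ[ℂ] (1 : B)) * Δ x) := by
  refine eq_of_forall_mul_one_tmul_eq hsup fun s b hb => ?_
  have hw := hcog.mul_one_tmul_mem hx hb
  rw [mul_assoc, hΔt x s b hb, tmul_one_mul_map_id, ← AlgEquiv.aut_inv, ← map_inv, inv_inv,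
    map_id_mul_one_tmul, mul_assoc]
  by_cases hs : s = r * t⁻¹
  · simp only [hs, mul_inv_rev, inv_inv]
  · -- for `s ≠ r t⁻¹` both conjugates of `y` lie in components orthogonal to `B_{r s⁻¹}`,
    -- the first leg of `Δ x (1 ⊗ b)`
    have hzero : ∀ g : G, g * t * g⁻¹ ≠ r * s⁻¹ → ∀ w ∈ tensorSub (ℬ (r * s⁻¹)) (ℬ s),
        (π g y ⊗ₜ[ℂ] (1 : B)) * w = 0 := fun g hg w hw =>
      tmul_one_mul_eq_zero_of_mem_tensorSub
        (fun a ha => horth _ _ hg _ (hcross.apply_mem g hy) a ha) hw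
    rw [hzero s ?_ _ hw, hzero _ ?_ _ hw, map_zero, map_zero]
    · intro h
      have h' : r * (t * r⁻¹) = r * s⁻¹ := by rw [← h]; group
      exact hs (by rw [← inv_inv s, ← mul_left_cancel h']; group)
    · intro h
      exact hs (by rw [← (mul_right_cancel h : s * t = r)]; group)

theorem IsDeformedComul.span_mul_one_tmul (hΔt : IsDeformedComul ℬ π Δ Δt)
    (hcog : IsLeftCograding ℬ Δ) (hcross : IsCrossing ℬ π) (r t : G) :
    Submodule.span ℂ {z | ∃ x ∈ ℬ r, ∃ y ∈ ℬ t, z = Δt x * (1 ⊗ₜ[ℂ] y)} =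
      tensorSub (ℬ (t⁻¹ * r)) (ℬ t) :=
  calc Submodule.span ℂ {z | ∃ x ∈ ℬ r, ∃ y ∈ ℬ t, z = Δt x * (1 ⊗ₜ[ℂ] y)}
      = Submodule.span ℂ (map (π t⁻¹).toLinearMap LinearMap.id ''
          {z | ∃ x ∈ ℬ (r * t⁻¹ * t), ∃ y ∈ ℬ t, z = Δ x * (1 ⊗ₜ[ℂ] y)}) := by
        simp only [inv_mul_cancel_right, setOf_exists_mem_eq_image2, Set.image_image2]
        exact congrArg _ (Set.image2_congr fun x _ y hy => hΔt x t y hy)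
    _ = (tensorSub (ℬ (r * t⁻¹)) (ℬ t)).map (map (π t⁻¹).toLinearMap LinearMap.id) := by
        rw [Submodule.span_image, hcog]
    _ = tensorSub (ℬ (t⁻¹ * r)) (ℬ t) := by
        rw [tensorSub_map_map, hcross, Submodule.map_id]
        group

theorem IsDeformedComul.span_tmul_one_mul (hΔt : IsDeformedComul ℬ π Δ Δt)
    (hsup : ⨆ s, ℬ s = ⊤) (horth : ∀ p q : G, p ≠ q → ∀ a ∈ ℬ p, ∀ b ∈ ℬ q, a * b = 0)
    (hcogL : IsLeftCograding ℬ Δ) (hcogR : IsRightCograding ℬ Δ) (hcross : IsCrossing ℬ π)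
    (r t : G) :
    Submodule.span ℂ {z | ∃ x ∈ ℬ r, ∃ y ∈ ℬ t, z = (y ⊗ₜ[ℂ] (1 : B)) * Δt x} =
      tensorSub (ℬ t) (ℬ (r * t⁻¹)) :=
  calc Submodule.span ℂ {z | ∃ x ∈ ℬ r, ∃ y ∈ ℬ t, z = (y ⊗ₜ[ℂ] (1 : B)) * Δt x}
      = Submodule.span ℂ (map (π (t * r⁻¹)).toLinearMap LinearMap.id ''
          {z | ∃ x ∈ ℬ ((t * r⁻¹)⁻¹ * t * (t * r⁻¹)⁻¹⁻¹ * (r * t⁻¹)),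
            ∃ y ∈ ℬ ((t * r⁻¹)⁻¹ * t * (t * r⁻¹)⁻¹⁻¹), z = (y ⊗ₜ[ℂ] (1 : B)) * Δ x}) := by
        rw [show (t * r⁻¹)⁻¹ * t * (t * r⁻¹)⁻¹⁻¹ * (r * t⁻¹) = r by group, ← hcross]
        simp only [setOf_exists_mem_eq_image2, Submodule.map_coe, Set.image2_image_right,
          Set.image_image2]
        exact congrArg _ (Set.image2_congr fun x hx y hy =>
          hΔt.tmul_one_mul hsup horth hcogL hcross hx hy)
    _ = (tensorSub (ℬ ((t * r⁻¹)⁻¹ * t * (t * r⁻¹)⁻¹⁻¹)) (ℬ (r * t⁻¹))).map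
          (map (π (t * r⁻¹)).toLinearMap LinearMap.id) := by
        rw [Submodule.span_image, hcogR]
    _ = tensorSub (ℬ t) (ℬ (r * t⁻¹)) := by
        rw [tensorSub_map_map, hcross, Submodule.map_id]
        group

end

theorem crossing_deformation_is_cograded_general
    {G : Type*} [Group G] [DecidableEq G] {B : Type*} [Ring B] [HopfAlgebra ℂ B]
    (ℬ : G → Submodule ℂ B)
    (hdec : DirectSum.IsInternal ℬ)
    (horth : ∀ p q : G, p ≠ q → ∀ a ∈ ℬ p, ∀ b ∈ ℬ q, a * b = 0)
    (hcograded₁ : ∀ p q : G,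
      Submodule.span ℂ {z | ∃ a ∈ ℬ (p * q), ∃ b ∈ ℬ q,
        z = (Coalgebra.comul (R := ℂ) a) * (1 ⊗ₜ[ℂ] b)} = tensorSub (ℬ p) (ℬ q))
    (hcograded₂ : ∀ p q : G,
      Submodule.span ℂ {z | ∃ a ∈ ℬ (p * q), ∃ b ∈ ℬ p,
        z = (b ⊗ₜ[ℂ] 1) * (Coalgebra.comul (R := ℂ) a)} = tensorSub (ℬ p) (ℬ q))
    -- the admissible action
    (π : G →* (B ≃ₐ[ℂ] B))
    (hcross : ∀ p q : G, (ℬ q).map (π p).toLinearMap = ℬ (p * q * p⁻¹))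
    -- the deformed comultiplication
    (Δt : B →ₗ[ℂ] B ⊗[ℂ] B)
    (hΔt : ∀ (b : B) (q : G), ∀ b' ∈ ℬ q,
      Δt b * (1 ⊗ₜ[ℂ] b') = (TensorProduct.map (π q⁻¹).toLinearMap LinearMap.id)
        (Coalgebra.comul (R := ℂ) b * (1 ⊗ₜ[ℂ] b'))) :
    ∀ p q : G,
      Submodule.span ℂ {z | ∃ x ∈ ℬ p⁻¹, ∃ y ∈ ℬ q⁻¹, z = Δt x * (1 ⊗ₜ[ℂ] y)}
        = tensorSub (ℬ (q * p⁻¹)) (ℬ q⁻¹) ∧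
      Submodule.span ℂ {z | ∃ x ∈ ℬ p⁻¹, ∃ y ∈ ℬ q⁻¹, z = (y ⊗ₜ[ℂ] (1 : B)) * Δt x}
        = tensorSub (ℬ q⁻¹) (ℬ (p⁻¹ * q)) := by
  have hdeformed : IsDeformedComul ℬ π Coalgebra.comul Δt := hΔt
  intro p q
  constructor
  · simpa only [inv_inv] using hdeformed.span_mul_one_tmul hcograded₁ hcross p⁻¹ q⁻¹
  · simpa only [inv_inv] using hdeformed.span_tmul_one_mul hdec.submodule_iSup_eq_top horth
      hcograded₁ hcograded₂ hcross p⁻¹ q⁻¹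

/-- if the admissible action `π` is a crossing
(`π_p(B_q) = B_{pqp⁻¹}`), then the deformed coalgebra `B̃ = (B, Δ̃)` is again
`G`-cograded with components `B̃_p = B_{p⁻¹}`:
`Δ̃(B̃_p)(1 ⊗ B̃_q) = B̃_{pq⁻¹} ⊗ B̃_q` and `(B̃_q ⊗ 1)Δ̃(B̃_p) = B̃_q ⊗ B̃_{q⁻¹p}`
(note `B̃_{pq⁻¹} = B_{qp⁻¹}` and `B̃_{q⁻¹p} = B_{p⁻¹q}`). -/
theorem crossing_deformation_is_cograded
    {G : Type*} [Group G] [DecidableEq G] {B : Type*} [Ring B] [HopfAlgebra ℂ B]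
    (ℬ : G → Submodule ℂ B)
    (hdec : DirectSum.IsInternal ℬ)
    (horth : ∀ p q : G, p ≠ q → ∀ a ∈ ℬ p, ∀ b ∈ ℬ q, a * b = 0)
    (hcograded₁ : ∀ p q : G,
      Submodule.span ℂ {z | ∃ a ∈ ℬ (p * q), ∃ b ∈ ℬ q,
        z = (Coalgebra.comul (R := ℂ) a) * (1 ⊗ₜ[ℂ] b)} = tensorSub (ℬ p) (ℬ q))
    (hcograded₂ : ∀ p q : G,
      Submodule.span ℂ {z | ∃ a ∈ ℬ (p * q), ∃ b ∈ ℬ p,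
        z = (b ⊗ₜ[ℂ] 1) * (Coalgebra.comul (R := ℂ) a)} = tensorSub (ℬ p) (ℬ q))
    -- the admissible action
    (π : G →* (B ≃ₐ[ℂ] B))
    (hπΔ : ∀ (p : G) (b : B), Coalgebra.comul (R := ℂ) (π p b) =
      (TensorProduct.map (π p).toLinearMap (π p).toLinearMap) (Coalgebra.comul (R := ℂ) b))
    (hcross : ∀ p q : G, (ℬ q).map (π p).toLinearMap = ℬ (p * q * p⁻¹))
    -- the deformed comultiplication
    (Δt : B →ₗ[ℂ] B ⊗[ℂ] B)
    (hΔt : ∀ (b : B) (q : G), ∀ b' ∈ ℬ q,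
      Δt b * (1 ⊗ₜ[ℂ] b') = (TensorProduct.map (π q⁻¹).toLinearMap LinearMap.id)
        (Coalgebra.comul (R := ℂ) b * (1 ⊗ₜ[ℂ] b'))) :
    ∀ p q : G,
      Submodule.span ℂ {z | ∃ x ∈ ℬ p⁻¹, ∃ y ∈ ℬ q⁻¹, z = Δt x * (1 ⊗ₜ[ℂ] y)}
        = tensorSub (ℬ (q * p⁻¹)) (ℬ q⁻¹) ∧
      Submodule.span ℂ {z | ∃ x ∈ ℬ p⁻¹, ∃ y ∈ ℬ q⁻¹, z = (y ⊗ₜ[ℂ] (1 : B)) * Δt x}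
        = tensorSub (ℬ q⁻¹) (ℬ (p⁻¹ * q)) :=
  crossing_deformation_is_cograded_general ℬ hdec horth hcograded₁ hcograded₂ π hcross Δt hΔt
end
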